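/- Let f : F^n → F be in layered canalizing form with r layers of sizes k_1, …, k_r, canalizing depth d, and canalizing input sets S_{i,j}, and suppose the core function P_C is canalizing in the variable x_s with canalizing input set S_s (but P_C is not 1-canalizing). If x_a is a variable in the support of P_C that is not canalizing for P_C, then the number of transitions changed by deleting x_a satisfies #{x ∈ F^n : f(x_1, …, x_{a−1}, 0, x_{a+1}, …, x_n) ≠ f(x)} ≤ p^{n − d − 2} · (∏_{i=1}^{r} ∏_{j=1}^{k_i} (p − |S_{i,j}|)) · (p − |S_s|) · (p − 1). -/

import Mathlib

open Finset

/-- Indicator function of the complement of `S`: `Qt S x = 1` if `x ∉ S`, `0` if `x ∈ S`. -/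
def Qt {F : Type*} [Fintype F] [DecidableEq F] [Zero F] [One F] (S : Finset F) (x : F) : F :=
  if x ∈ S then 0 else 1

/-- `g` actually depends on (is essential in) its `i`-th variable. -/
def DependsOnVar {F : Type*} (n : ℕ) (g : (Fin n → F) → F) (i : Fin n) : Prop :=
  ∃ x y : Fin n → F, (∀ j, j ≠ i → x j = y j) ∧ g x ≠ g y

/-- `g` is canalizing in its `i`-th variable with canalizing input set `S`
(a nonempty proper subset of `F`) and canalizing output `b`. -/
def Canalizing {F : Type*} [Fintype F] [DecidableEq F] (n : ℕ) (g : (Fin n → F) → F)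
    (i : Fin n) (S : Finset F) (b : F) : Prop :=
  S.Nonempty ∧ S ≠ Finset.univ ∧ ∀ x : Fin n → F, x i ∈ S → g x = b

/-- `f` is 1-canalizing in its `i`-th variable with canalizing input set `S`
(a nonempty proper subset of `F`) and canalizing output `b`: `f = b` whenever `x i ∈ S`,
and on `x i ∉ S` the value of `f` is given by a single function of the remaining variables
which is not identically `b`. -/
def OneCanalizing {F : Type*} [Fintype F] [DecidableEq F] (n : ℕ) (f : (Fin n → F) → F)
    (i : Fin n) (S : Finset F) (b : F) : Prop :=
  S.Nonempty ∧ S ≠ Finset.univ ∧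
  (∀ x : Fin n → F, x i ∈ S → f x = b) ∧
  (∀ x y : Fin n → F, x i ∉ S → y i ∉ S → (∀ j, j ≠ i → x j = y j) → f x = f y) ∧
  (∃ x : Fin n → F, x i ∉ S ∧ f x ≠ b)

/-- Nested evaluation `M₁(M₂(⋯(M_r · P + B_r)⋯) + B₂) + B₁`. -/
def nestEval {F : Type*} [Mul F] [Add F] : List (F × F) → F → F
  | [], P => P
  | (m, b) :: t, P => m * nestEval t P + b

/-- Layered canalizing form data for a function of `n` variables with `r ≥ 1` layers:
pairwise disjoint layer blocks, nonempty proper canalizing input sets for the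
layer variables, layer constants `B` with the last one nonzero, and a core function
`P_C` of the remaining variables having no 1-canalizing variables. -/
structure LayeredForm (F : Type*) [Field F] [Fintype F] [DecidableEq F] (n r : ℕ) where
  hr : 0 < r
  layer : Fin r → Finset (Fin n)
  disj : ∀ i j : Fin r, i ≠ j → Disjoint (layer i) (layer j)
  S : Fin n → Finset F
  Sne : ∀ i : Fin r, ∀ v ∈ layer i, (S v).Nonempty
  Spr : ∀ i : Fin r, ∀ v ∈ layer i, S v ≠ Finset.univ
  B : Fin r → F
  Blast : B ⟨r - 1, Nat.sub_lt hr Nat.one_pos⟩ ≠ 0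
  PC : (Fin n → F) → F
  PCvars : ∀ i : Fin r, ∀ v ∈ layer i, ¬ DependsOnVar n PC v
  PCnc : ¬ ∃ (v : Fin n) (S' : Finset F) (b : F), OneCanalizing n PC v S' b

/-- The product `M_i = ∏_{v ∈ L_i} Q̃_{S_v}(x_v)` over the `i`-th layer. -/
def LayeredForm.M {F : Type*} [Field F] [Fintype F] [DecidableEq F] {n r : ℕ}
    (L : LayeredForm F n r) (i : Fin r) (x : Fin n → F) : F :=
  ∏ v ∈ L.layer i, Qt (L.S v) (x v)

/-- The function determined by a layered canalizing form:
`f(x) = M₁(M₂(⋯(M_r · P_C + B_r)⋯) + B₂) + B₁`. -/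
def LayeredForm.eval {F : Type*} [Field F] [Fintype F] [DecidableEq F] {n r : ℕ}
    (L : LayeredForm F n r) (x : Fin n → F) : F :=
  nestEval (List.ofFn fun i => (L.M i x, L.B i)) (L.PC x)

/-- The number of state-space transitions changed when the input `s` of `f`
is replaced by the constant `a` (edge deletion when `a = 0`). -/
def chCount {F : Type*} [Fintype F] [DecidableEq F] {n : ℕ}
    (f : (Fin n → F) → F) (s : Fin n) (a : F) : ℕ :=
  (Finset.univ.filter fun x : Fin n → F => f (Function.update x s a) ≠ f x).card

/-!
A point `x` at which deleting `x_a` changes `f` must make every layer product `M_i` nonzero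
(otherwise the nesting hides the core `P_C`), and must change `P_C` itself. The first condition
puts every layer variable outside its canalizing set; the second forces `x_a ≠ 0` and, since
`P_C` is constant on `x_s ∈ S_s` and `s ≠ a` (because `x_a` is not canalizing), also
`x_s ∉ S_s`. Counting the points of the resulting box gives the bound.
-/

lemma nestEval_ne_imp {F : Type*} [MulZeroClass F] [Add F] (l : List (F × F)) (P P' : F)
    (h : nestEval l P ≠ nestEval l P') : P ≠ P' ∧ ∀ mb ∈ l, mb.1 ≠ 0 := by
  induction l with
  | nil => exact ⟨h, by simp⟩
  | cons hd t ih =>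
    obtain ⟨m, b⟩ := hd
    simp only [nestEval] at h
    have hm : m ≠ 0 := by rintro rfl; simp at h
    obtain ⟨hP, ht⟩ := ih fun he => h (by rw [he])
    refine ⟨hP, fun mb hmb => ?_⟩
    rcases List.mem_cons.mp hmb with rfl | hmem
    · exact hm
    · exact ht mb hmem

lemma Canalizing.notMem_of_update_ne {F : Type*} [Fintype F] [DecidableEq F] {n : ℕ}
    {g : (Fin n → F) → F} {s a : Fin n} {S : Finset F} {b : F} (hg : Canalizing n g s S b)
    (hsa : s ≠ a) {x : Fin n → F} {c : F} (hx : g (Function.update x a c) ≠ g x) :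
    x s ∉ S := fun hxs =>
  hx <| by rw [hg.2.2 x hxs, hg.2.2 _ (by rwa [Function.update_of_ne hsa])]

lemma prod_card_eq_pow_mul_prod {ι α : Type*} [Fintype ι] [DecidableEq ι] [Fintype α]
    (A : ι → Finset α) (T : Finset ι) (hA : ∀ v ∉ T, A v = univ) :
    ∏ v, (A v).card = Fintype.card α ^ (Fintype.card ι - T.card) * ∏ v ∈ T, (A v).card := by
  rw [← prod_mul_prod_compl T, mul_comm, prod_congr rfl fun v hv => by
    rw [hA v (mem_compl.mp hv), card_univ], prod_const, card_compl]

namespace LayeredForm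

variable {F : Type*} [Field F] [Fintype F] [DecidableEq F] {n r : ℕ} (L : LayeredForm F n r)

def layerVars : Finset (Fin n) := univ.biUnion L.layer

lemma mem_layerVars {v : Fin n} : v ∈ L.layerVars ↔ ∃ i, v ∈ L.layer i := by
  simp [layerVars]

lemma card_layerVars : L.layerVars.card = ∑ i, (L.layer i).card :=
  card_biUnion fun i _ j _ hij => L.disj i j hij

lemma prod_layerVars {M : Type*} [CommMonoid M] (g : Fin n → M) :
    ∏ v ∈ L.layerVars, g v = ∏ i, ∏ v ∈ L.layer i, g v :=
  prod_biUnion fun i _ j _ hij => L.disj i j hij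

lemma notMem_layerVars_of_dependsOnVar {a : Fin n} (ha : DependsOnVar n L.PC a) :
    a ∉ L.layerVars := by
  rw [mem_layerVars]
  rintro ⟨i, hi⟩
  exact L.PCvars i a hi ha

lemma M_update_of_notMem {a : Fin n} (ha : a ∉ L.layerVars) (i : Fin r) (x : Fin n → F)
    (c : F) : L.M i (Function.update x a c) = L.M i x :=
  prod_congr rfl fun v hv => by
    rw [Function.update_of_ne fun hva : v = a => ha (L.mem_layerVars.mpr ⟨i, hva ▸ hv⟩)]

lemma notMem_S_of_M_ne_zero {i : Fin r} {x : Fin n → F} (hM : L.M i x ≠ 0) {v : Fin n}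
    (hv : v ∈ L.layer i) : x v ∉ L.S v := fun hxv =>
  hM <| prod_eq_zero hv (by simp [Qt, hxv])

lemma eval_update_ne_imp {a : Fin n} (ha : a ∉ L.layerVars) {x : Fin n → F} {c : F}
    (h : L.eval (Function.update x a c) ≠ L.eval x) :
    L.PC (Function.update x a c) ≠ L.PC x ∧ ∀ i, L.M i x ≠ 0 := by
  simp only [eval, L.M_update_of_notMem ha] at h
  obtain ⟨hPC, hM⟩ := nestEval_ne_imp _ _ _ h
  exact ⟨hPC, fun i => hM _ (List.mem_ofFn.mpr ⟨i, rfl⟩)⟩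

/-- The coordinatewise box containing every point at which setting `x_a := 0` changes `L.eval`,
when `L.PC` is canalizing in `x_s` with input set `Ss`. -/
def deletionBox (a s : Fin n) (Ss : Finset F) (v : Fin n) : Finset F :=
  if v ∈ L.layerVars then (L.S v)ᶜ
  else if v = a then {0}ᶜ
  else if v = s then Ssᶜ
  else univ

lemma mem_piFinset_deletionBox {a s : Fin n} {Ss : Finset F} {b : F}
    (ha : a ∉ L.layerVars) (has : a ≠ s) (hcan : Canalizing n L.PC s Ss b) {x : Fin n → F}
    (hx : L.eval (Function.update x a 0) ≠ L.eval x) :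
    x ∈ Fintype.piFinset (L.deletionBox a s Ss) := by
  obtain ⟨hPC, hM⟩ := L.eval_update_ne_imp ha hx
  rw [Fintype.mem_piFinset]
  intro v
  unfold deletionBox
  split_ifs with hvL hva hvs
  · obtain ⟨i, hvi⟩ := L.mem_layerVars.mp hvL
    exact mem_compl.mpr (L.notMem_S_of_M_ne_zero (hM i) hvi)
  · subst hva
    simp only [mem_compl, mem_singleton]
    rintro h0
    exact hPC (by rw [← h0, Function.update_eq_self])
  · subst hvs
    exact mem_compl.mpr (hcan.notMem_of_update_ne has.symm hPC)
  · exact mem_univ _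

lemma prod_card_deletionBox {a s : Fin n} (Ss : Finset F) (ha : a ∉ L.layerVars)
    (hs : s ∉ L.layerVars) (has : a ≠ s) :
    ∏ v, (L.deletionBox a s Ss v).card =
      Fintype.card F ^ (n - (∑ i : Fin r, (L.layer i).card) - 2) *
        (∏ i : Fin r, ∏ v ∈ L.layer i, (Fintype.card F - (L.S v).card)) *
        (Fintype.card F - Ss.card) * (Fintype.card F - 1) := by
  have haT : a ∉ insert s L.layerVars := by simp [has, ha]
  rw [prod_card_eq_pow_mul_prod _ (insert a (insert s L.layerVars)) fun v hv => by
      simp only [mem_insert, not_or] at hv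
      simp [deletionBox, hv.1, hv.2.1, hv.2.2],
    prod_insert haT, prod_insert hs, card_insert_of_notMem haT, card_insert_of_notMem hs,
    card_layerVars, Fintype.card_fin, ← L.prod_layerVars]
  have hbox : ∀ v ∈ L.layerVars, (L.deletionBox a s Ss v).card = Fintype.card F - (L.S v).card :=
    fun v hv => by simp [deletionBox, hv, card_compl]
  rw [prod_congr rfl hbox]
  simp only [deletionBox, ha, hs, if_false, if_pos, if_neg has.symm, card_compl, card_singleton]
  rw [Nat.sub_sub]
  ring

end LayeredForm

/-- Edge-deletion bound for a non-canalizing variable `a` in the support of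
a core function `P_C` that is canalizing (but not 1-canalizing) in a variable `s`. -/
theorem stmt13 {F : Type*} [Field F] [Fintype F] [DecidableEq F] {n r : ℕ}
    (f : (Fin n → F) → F) (L : LayeredForm F n r) (hf : f = L.eval)
    (s : Fin n) (hsrem : ∀ i : Fin r, s ∉ L.layer i)
    (Ss : Finset F) (hcan : ∃ b : F, Canalizing n L.PC s Ss b)
    (a : Fin n) (hadep : DependsOnVar n L.PC a)
    (hanc : ¬ ∃ (S' : Finset F) (b : F), Canalizing n L.PC a S' b) :
    chCount f a 0 ≤
      Fintype.card F ^ (n - (∑ i : Fin r, (L.layer i).card) - 2) *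
        (∏ i : Fin r, ∏ v ∈ L.layer i, (Fintype.card F - (L.S v).card)) *
        (Fintype.card F - Ss.card) * (Fintype.card F - 1) := by
  subst hf
  obtain ⟨b, hb⟩ := hcan
  have has : a ≠ s := by rintro rfl; exact hanc ⟨Ss, b, hb⟩
  have ha := L.notMem_layerVars_of_dependsOnVar hadep
  have hs : s ∉ L.layerVars := by
    rw [L.mem_layerVars]; rintro ⟨i, hi⟩; exact hsrem i hi
  calc chCount L.eval a 0
      ≤ (Fintype.piFinset (L.deletionBox a s Ss)).card :=
        card_le_card fun x hx => L.mem_piFinset_deletionBox ha has hb (mem_filter.mp hx).2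
    _ = ∏ v, (L.deletionBox a s Ss v).card := Fintype.card_piFinset _
    _ = _ := L.prod_card_deletionBox Ss ha hs has
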